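/- For probability distributions p, q on a finite set with all entries strictly positive, Σ_z (p(z) - q(z)) log(p(z)/q(z)) ≤ Σ_z (p(z) - q(z))² / min(p(z), q(z)). -/

import Mathlib

open Real

lemma sub_mul_log_div_le_sq_div_of_le {a b : ℝ} (hb : 0 < b) (hba : b ≤ a) :
    (a - b) * log (a / b) ≤ (a - b) ^ 2 / b := by
  have ha : 0 < a := hb.trans_le hba
  calc (a - b) * log (a / b) ≤ (a - b) * (a / b - 1) :=
        mul_le_mul_of_nonneg_left (log_le_sub_one_of_pos (by positivity)) (sub_nonneg.2 hba)
    _ = (a - b) ^ 2 / b := by field_simp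

lemma sub_mul_log_div_le_sq_div_min {a b : ℝ} (ha : 0 < a) (hb : 0 < b) :
    (a - b) * log (a / b) ≤ (a - b) ^ 2 / min a b := by
  wlog hba : b ≤ a generalizing a b
  · have hswap := this hb ha (le_of_not_ge hba)
    have hlog : log (b / a) = -log (a / b) := by rw [← inv_div, log_inv]
    rw [hlog, min_comm] at hswap
    convert hswap using 1 <;> ring
  rw [min_eq_right hba]
  exact sub_mul_log_div_le_sq_div_of_le hb hba

theorem symmetrized_kl_le_chi_general (Z : Type*) [Fintype Z] (p q : Z → ℝ)
    (hp : ∀ z, 0 < p z) (hq : ∀ z, 0 < q z) :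
    ∑ z, (p z - q z) * Real.log (p z / q z) ≤
      ∑ z, (p z - q z) ^ 2 / min (p z) (q z) :=
  Finset.sum_le_sum fun z _ => sub_mul_log_div_le_sq_div_min (hp z) (hq z)

theorem symmetrized_kl_le_chi (Z : Type*) [Fintype Z] (p q : Z → ℝ)
    (hp : ∀ z, 0 < p z) (hq : ∀ z, 0 < q z)
    (hp1 : ∑ z, p z = 1) (hq1 : ∑ z, q z = 1) :
    ∑ z, (p z - q z) * Real.log (p z / q z) ≤
      ∑ z, (p z - q z) ^ 2 / min (p z) (q z) :=
  symmetrized_kl_le_chi_general Z p q hp hq
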